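/- For nonzero PSD matrices K_X, K_Y, the squared normalized Bures similarity is bounded by CKA: CKA(K_X,K_Y)/√(rank(K_X)·rank(K_Y)) ≤ NBS(K_X,K_Y)² ≤ min(rank K_X, rank K_Y) · CKA(K_X,K_Y). -/

import Mathlib

open Matrix

lemma real_conjTranspose_eq {m n : ℕ} (A : Matrix (Fin m) (Fin n) ℝ) : Aᴴ = Aᵀ := rfl

lemma psd_tmul {m n : ℕ} (A : Matrix (Fin m) (Fin n) ℝ) : (Aᵀ * A).PosSemidef := by
  have h := Matrix.posSemidef_conjTranspose_mul_self A
  rwa [real_conjTranspose_eq] at h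

lemma psd_gram {m n : ℕ} (A : Matrix (Fin m) (Fin n) ℝ) : (A * Aᵀ).PosSemidef := by
  have h := Matrix.posSemidef_self_mul_conjTranspose A
  rwa [real_conjTranspose_eq] at h

namespace Matrix.PosSemidef

open scoped ComplexOrder

/-- The square root of a positive semidefinite matrix, as defined in the older Mathlib. -/
noncomputable def sqrt {n 𝕜 : Type*} [Fintype n] [RCLike 𝕜] [DecidableEq n] {A : Matrix n n 𝕜}
    (hA : A.PosSemidef) : Matrix n n 𝕜 :=
  hA.1.eigenvectorUnitary.1 * diagonal ((↑) ∘ (√·) ∘ hA.1.eigenvalues) *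
    (star hA.1.eigenvectorUnitary : Matrix n n 𝕜)

lemma posSemidef_sqrt {n 𝕜 : Type*} [Fintype n] [RCLike 𝕜] [DecidableEq n] {A : Matrix n n 𝕜}
    (hA : A.PosSemidef) : hA.sqrt.PosSemidef := by
  have hd : (diagonal (((↑) : ℝ → 𝕜) ∘ (√·) ∘ hA.1.eigenvalues)).PosSemidef :=
    posSemidef_diagonal_iff.mpr fun i => by simp [Real.sqrt_nonneg]
  exact hd.mul_mul_conjTranspose_same (hA.1.eigenvectorUnitary : Matrix n n 𝕜)

end Matrix.PosSemidef

lemma psd_sand {M : ℕ} {Kx Ky : Matrix (Fin M) (Fin M) ℝ} (hx : Kx.PosSemidef) (hy : Ky.PosSemidef) :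
    (hx.sqrt * Ky * hx.sqrt).PosSemidef := by
  have h := hy.mul_mul_conjTranspose_same hx.sqrt
  rwa [hx.posSemidef_sqrt.isHermitian.eq] at h

/-- Nuclear norm: sum of singular values, i.e. `Tr[(AᵀA)^{1/2}]`. -/
noncomputable def nuclearNorm {m n : ℕ} (A : Matrix (Fin m) (Fin n) ℝ) : ℝ :=
  (Matrix.PosSemidef.sqrt (psd_tmul A)).trace

/-- Frobenius norm. -/
noncomputable def frobNorm {m n : ℕ} (A : Matrix (Fin m) (Fin n) ℝ) : ℝ :=
  Real.sqrt (Matrix.trace (Aᵀ * A))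

/-- Fidelity `Tr[(Kx^{1/2} Ky Kx^{1/2})^{1/2}]` between PSD matrices. -/
noncomputable def fidelity {M : ℕ} {Kx Ky : Matrix (Fin M) (Fin M) ℝ}
    (hx : Kx.PosSemidef) (hy : Ky.PosSemidef) : ℝ :=
  (Matrix.PosSemidef.sqrt (psd_sand hx hy)).trace

/-!
For a Hermitian matrix with eigenvalues `λᵢ` we have `Tr K = ∑ λᵢ`, `Tr K² = ∑ λᵢ²` and
`rank K = #{i | λᵢ ≠ 0}`, so Cauchy–Schwarz on the support gives
`Tr K² ≤ (Tr K)² ≤ rank K · Tr K²`. Applied to `Kx` and `Ky`, this compares the CKA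
denominator `√(Tr Kx² Tr Ky²)` with `Tr Kx Tr Ky`. Applied to the square root of
`P = Kx^{1/2} Ky Kx^{1/2}`, whose trace is the fidelity, it gives
`Tr P ≤ ℱ² ≤ rank P · Tr P`, where `Tr P = Tr (Kx Ky)` and `rank P ≤ min (rank Kx) (rank Ky)`.
-/

open Finset

lemma Finset.sq_sum_le_card_support_mul_sum_sq {ι R : Type*} [Fintype ι] [Field R] [LinearOrder R]
    [IsStrictOrderedRing R] (f : ι → R) :
    (∑ i, f i) ^ 2 ≤ #{i | f i ≠ 0} * ∑ i, f i ^ 2 := by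
  rw [← sum_filter_ne_zero]
  refine sq_sum_le_card_mul_sum_sq.trans ?_
  gcongr _ * ?_
  exact sum_le_univ_sum_of_nonneg fun i => sq_nonneg (f i)

namespace Matrix

variable {n : Type*} [Fintype n] {A B : Matrix n n ℝ}

lemma IsHermitian.trace_mul_self_nonneg (hA : A.IsHermitian) : 0 ≤ (A * A).trace := by
  nth_rw 1 [← hA.eq]
  exact (posSemidef_conjTranspose_mul_self A).trace_nonneg

lemma IsHermitian.trace_mul_self_pos (hA : A.IsHermitian) (h0 : A ≠ 0) : 0 < (A * A).trace := by
  refine hA.trace_mul_self_nonneg.lt_of_ne' ?_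
  nth_rw 1 [← hA.eq]
  exact trace_conjTranspose_mul_self_eq_zero_iff.not.mpr h0

lemma PosSemidef.trace_pos (hA : A.PosSemidef) (h0 : A ≠ 0) : 0 < A.trace :=
  hA.trace_nonneg.lt_of_ne' (hA.trace_eq_zero_iff.not.mpr h0)

variable [DecidableEq n]

namespace IsHermitian

lemma trace_mul_self_eq_sum_sq (hA : A.IsHermitian) :
    (A * A).trace = ∑ i, hA.eigenvalues i ^ 2 := by
  conv_lhs => rw [hA.spectral_theorem, ← map_mul, Unitary.conjStarAlgAut_apply, trace_mul_cycle,
    Unitary.coe_star_mul_self, one_mul, diagonal_mul_diagonal, trace_diagonal]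
  simp [sq]

lemma sq_trace_le_rank_mul_trace_mul_self (hA : A.IsHermitian) :
    A.trace ^ 2 ≤ A.rank * (A * A).trace := by
  rw [hA.trace_eq_sum_eigenvalues, hA.trace_mul_self_eq_sum_sq, hA.rank_eq_card_non_zero_eigs,
    Fintype.card_subtype]
  simpa using sq_sum_le_card_support_mul_sum_sq hA.eigenvalues

lemma trace_mul_trace_le_sqrt_mul_sqrt (hA : A.IsHermitian) (hB : B.IsHermitian) :
    A.trace * B.trace ≤
      √((A * A).trace * (B * B).trace) * √((A.rank : ℝ) * B.rank) := by
  rw [← Real.sqrt_mul (mul_nonneg hA.trace_mul_self_nonneg hB.trace_mul_self_nonneg)]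
  refine (le_abs_self _).trans (Real.abs_le_sqrt ?_)
  calc (A.trace * B.trace) ^ 2 = A.trace ^ 2 * B.trace ^ 2 := mul_pow _ _ _
    _ ≤ (A.rank * (A * A).trace) * (B.rank * (B * B).trace) :=
        mul_le_mul hA.sq_trace_le_rank_mul_trace_mul_self hB.sq_trace_le_rank_mul_trace_mul_self
          (sq_nonneg _) (mul_nonneg (Nat.cast_nonneg _) hA.trace_mul_self_nonneg)
    _ = (A * A).trace * (B * B).trace * (A.rank * B.rank) := by ring

end IsHermitian

namespace PosSemidef

lemma trace_mul_self_le_sq_trace (hA : A.PosSemidef) : (A * A).trace ≤ A.trace ^ 2 := by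
  rw [hA.1.trace_eq_sum_eigenvalues, hA.1.trace_mul_self_eq_sum_sq]
  simpa using sum_sq_le_sq_sum_of_nonneg fun i _ => hA.eigenvalues_nonneg i

lemma sqrt_trace_mul_self_mul_le_trace_mul_trace (hA : A.PosSemidef) (hB : B.PosSemidef) :
    √((A * A).trace * (B * B).trace) ≤ A.trace * B.trace := by
  rw [Real.sqrt_le_left (mul_nonneg hA.trace_nonneg hB.trace_nonneg), mul_pow]
  exact mul_le_mul hA.trace_mul_self_le_sq_trace hB.trace_mul_self_le_sq_trace
    hB.1.trace_mul_self_nonneg (sq_nonneg _)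

lemma sqrt_mul_self (hA : A.PosSemidef) : hA.sqrt * hA.sqrt = A := by
  conv_rhs => rw [hA.1.spectral_theorem, Unitary.conjStarAlgAut_apply]
  rw [sqrt]
  simp only [Matrix.mul_assoc]
  rw [← Matrix.mul_assoc (star _) _, UnitaryGroup.star_mul_self, Matrix.one_mul,
    ← Matrix.mul_assoc (diagonal _), diagonal_mul_diagonal]
  congr 3
  funext i
  simp [Real.mul_self_sqrt (hA.eigenvalues_nonneg i)]

lemma rank_sqrt (hA : A.PosSemidef) : hA.sqrt.rank = A.rank := by
  conv_rhs => rw [← hA.sqrt_mul_self]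
  nth_rw 2 [← hA.posSemidef_sqrt.isHermitian.eq]
  exact (rank_conjTranspose_mul_self _).symm

lemma trace_le_sq_trace_sqrt (hA : A.PosSemidef) : A.trace ≤ hA.sqrt.trace ^ 2 := by
  simpa only [hA.sqrt_mul_self] using hA.posSemidef_sqrt.trace_mul_self_le_sq_trace

lemma sq_trace_sqrt_le_rank_mul_trace (hA : A.PosSemidef) :
    hA.sqrt.trace ^ 2 ≤ A.rank * A.trace := by
  simpa only [hA.sqrt_mul_self, hA.rank_sqrt] using
    hA.posSemidef_sqrt.1.sq_trace_le_rank_mul_trace_mul_self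

lemma trace_sqrt_mul_mul_sqrt (hA : A.PosSemidef) (B : Matrix n n ℝ) :
    (hA.sqrt * B * hA.sqrt).trace = (A * B).trace := by
  rw [trace_mul_cycle, hA.sqrt_mul_self]

lemma trace_mul_nonneg (hA : A.PosSemidef) (hB : B.PosSemidef) : 0 ≤ (A * B).trace := by
  rw [← hA.trace_sqrt_mul_mul_sqrt]
  have hP := hB.conjTranspose_mul_mul_same hA.sqrt
  rw [hA.posSemidef_sqrt.isHermitian.eq] at hP
  exact hP.trace_nonneg

lemma rank_sqrt_mul_mul_sqrt_le (hA : A.PosSemidef) (B : Matrix n n ℝ) :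
    (hA.sqrt * B * hA.sqrt).rank ≤ min A.rank B.rank := by
  refine le_min ?_ ((rank_mul_le_left _ _).trans (rank_mul_le_right _ _))
  exact hA.rank_sqrt ▸ (rank_mul_le_left _ _).trans (rank_mul_le_left _ _)

end PosSemidef

end Matrix

section Fidelity

variable {M : ℕ} {Kx Ky : Matrix (Fin M) (Fin M) ℝ} (hx : Kx.PosSemidef) (hy : Ky.PosSemidef)

lemma trace_mul_le_fidelity_sq : (Kx * Ky).trace ≤ fidelity hx hy ^ 2 := by
  simpa only [fidelity, hx.trace_sqrt_mul_mul_sqrt] using (psd_sand hx hy).trace_le_sq_trace_sqrt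

lemma fidelity_sq_le_min_rank_mul_trace_mul :
    fidelity hx hy ^ 2 ≤ (min Kx.rank Ky.rank : ℝ) * (Kx * Ky).trace := by
  calc fidelity hx hy ^ 2 ≤ (hx.sqrt * Ky * hx.sqrt).rank * (Kx * Ky).trace := by
        simpa only [fidelity, hx.trace_sqrt_mul_mul_sqrt] using
          (psd_sand hx hy).sq_trace_sqrt_le_rank_mul_trace
    _ ≤ (min Kx.rank Ky.rank : ℝ) * (Kx * Ky).trace := by
        gcongr
        · exact hx.trace_mul_nonneg hy
        · exact_mod_cast hx.rank_sqrt_mul_mul_sqrt_le Ky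

end Fidelity

theorem nbs_sq_cka_envelope (M : ℕ) (Kx Ky : Matrix (Fin M) (Fin M) ℝ)
    (hx : Kx.PosSemidef) (hy : Ky.PosSemidef) (hx0 : Kx ≠ 0) (hy0 : Ky ≠ 0) :
    (Matrix.trace (Kx * Ky) / Real.sqrt (Matrix.trace (Kx * Kx) * Matrix.trace (Ky * Ky))) /
        Real.sqrt ((Kx.rank : ℝ) * (Ky.rank : ℝ)) ≤
      (fidelity hx hy / Real.sqrt (Matrix.trace Kx * Matrix.trace Ky)) ^ 2 ∧
    (fidelity hx hy / Real.sqrt (Matrix.trace Kx * Matrix.trace Ky)) ^ 2 ≤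
      (min Kx.rank Ky.rank : ℝ) *
        (Matrix.trace (Kx * Ky) / Real.sqrt (Matrix.trace (Kx * Kx) * Matrix.trace (Ky * Ky))) := by
  set F := fidelity hx hy
  have hT : 0 < Kx.trace * Ky.trace := mul_pos (hx.trace_pos hx0) (hy.trace_pos hy0)
  have hQ : 0 < √((Kx * Kx).trace * (Ky * Ky).trace) :=
    Real.sqrt_pos.mpr (mul_pos (hx.1.trace_mul_self_pos hx0) (hy.1.trace_mul_self_pos hy0))
  have hxy : 0 ≤ (Kx * Ky).trace := hx.trace_mul_nonneg hy
  rw [div_pow, Real.sq_sqrt hT.le, div_div]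
  constructor
  · calc (Kx * Ky).trace / (√((Kx * Kx).trace * (Ky * Ky).trace) * √((Kx.rank : ℝ) * Ky.rank))
        ≤ (Kx * Ky).trace / (Kx.trace * Ky.trace) :=
          div_le_div_of_nonneg_left hxy hT (hx.1.trace_mul_trace_le_sqrt_mul_sqrt hy.1)
      _ ≤ F ^ 2 / (Kx.trace * Ky.trace) :=
          div_le_div_of_nonneg_right (trace_mul_le_fidelity_sq hx hy) hT.le
  · calc F ^ 2 / (Kx.trace * Ky.trace)
        ≤ (min Kx.rank Ky.rank : ℝ) * (Kx * Ky).trace / (Kx.trace * Ky.trace) :=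
          div_le_div_of_nonneg_right (fidelity_sq_le_min_rank_mul_trace_mul hx hy) hT.le
      _ ≤ (min Kx.rank Ky.rank : ℝ) * (Kx * Ky).trace / √((Kx * Kx).trace * (Ky * Ky).trace) :=
          div_le_div_of_nonneg_left (mul_nonneg (by positivity) hxy) hQ
            (hx.sqrt_trace_mul_self_mul_le_trace_mul_trace hy)
      _ = _ := mul_div_assoc _ _ _
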